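/- arXiv:2101.01424 — 2 statements merged into one kernel-verified Lean document; each statement's English description precedes it below -/
import Mathlib

section
/- Let d ≥ 1 and let S be a nonempty subset of ℤ^d such that (i) any two elements of S are comparable in the componentwise partial order, and (ii) for every x ∈ S, both x + (1,…,1) and x − (1,…,1) belong to S. Then S, equipped with the order induced from the componentwise order on ℤ^d, is order-isomorphic to (ℤ, ≤). -/
/-!
Ordered as a chain, `S` is a linear order; its intervals are finite because intervals of `ℤ^d`
are, and translation by the all-ones vector shows that it has no maximum and no minimum.
A nonempty, locally finite linear order without endpoints is order-isomorphic to `ℤ`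
via the successor function.
-/

theorem nonempty_orderIso_int_of_locallyFiniteOrder (α : Type*) [LinearOrder α]
    [LocallyFiniteOrder α] [NoMaxOrder α] [NoMinOrder α] [Nonempty α] : Nonempty (α ≃o ℤ) :=
  letI := LinearLocallyFiniteOrder.succOrder α
  letI := LinearLocallyFiniteOrder.predOrder α
  ⟨orderIsoIntOfLinearSuccPredArch⟩

theorem IsChain.nonempty_orderIso_int {α : Type*} [PartialOrder α] [LocallyFiniteOrder α]
    {s : Set α} (hs : IsChain (· ≤ ·) s) (hne : s.Nonempty)
    (hmax : ∀ x ∈ s, ∃ y ∈ s, x < y) (hmin : ∀ x ∈ s, ∃ y ∈ s, y < x) :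
    Nonempty (s ≃o ℤ) := by
  classical
  let := hs.linearOrder
  have : Nonempty s := hne.to_subtype
  have : NoMaxOrder s := ⟨fun ⟨x, hx⟩ => let ⟨y, hy, hxy⟩ := hmax x hx; ⟨⟨y, hy⟩, hxy⟩⟩
  have : NoMinOrder s := ⟨fun ⟨x, hx⟩ => let ⟨y, hy, hyx⟩ := hmin x hx; ⟨⟨y, hy⟩, hyx⟩⟩
  exact nonempty_orderIso_int_of_locallyFiniteOrder s

/-- Lemma `lem:totally`: a nonempty, totally ordered subset of `ℤ^d` (componentwise order)
that is stable under adding and subtracting the all-ones vector is order-isomorphic to `ℤ`. -/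
theorem stmt_0 (d : ℕ) (hd : 1 ≤ d) (S : Set (Fin d → ℤ)) (hne : S.Nonempty)
    (htot : ∀ x ∈ S, ∀ y ∈ S, x ≤ y ∨ y ≤ x)
    (hclosed : ∀ x ∈ S, (x + fun _ => (1 : ℤ)) ∈ S ∧ (x - fun _ => (1 : ℤ)) ∈ S) :
    Nonempty (S ≃o ℤ) := by
  have : Nonempty (Fin d) := Fin.pos_iff_nonempty.mp hd
  have hone : (0 : Fin d → ℤ) < fun _ => 1 := Function.const_pos.mpr one_pos
  exact IsChain.nonempty_orderIso_int (fun x hx y hy _ => htot x hx y hy) hne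
    (fun x hx => ⟨_, (hclosed x hx).1, lt_add_of_pos_right x hone⟩)
    (fun x hx => ⟨_, (hclosed x hx).2, sub_lt_self x hone⟩)
end

section
/- Let G be a group and (U_n)_{n∈ℕ} an increasing sequence of finite subgroups of G (U_n ⊆ U_{n+1} for all n) such that G = ⋃_{n∈ℕ} U_n. Then for every integer j ≥ 1, the group cohomology H^j(G, ℚ), with G acting trivially on ℚ, vanishes. -/
/-!
On a finite subgroup `H`, summing a cochain over its last variable in `H` is a contracting
homotopy up to the factor `± |H|`: for `g` with entries in `H`,
`∑ₕ (d f)(g, h) = d (∑ₕ f(-, h)) g + (-1)ⁿ |H| f g`. Over `ℚ` one may divide by `|H|`, so every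
positive-degree cocycle restricted to `H` is a coboundary there.

For `G = ⋃ₖ Uₖ` one chooses primitives `φₖ` of a cocycle `f` on `Uₖ`, each agreeing with the
previous one on `Uₖ₋₁` (the Mittag-Leffler step): two primitives differ on `Uₖ₋₁` by a cocycle of
one degree less, which is a coboundary `dθ` there in positive degree; subtracting `d` of `θ`
extended by zero corrects the new primitive. In degree `0` the differential vanishes for trivial
coefficients, so nothing needs correcting. The `φₖ` then glue to a primitive on all of `G`.
-/

open CategoryTheory Set

universe u

namespace Fin

variable {α : Type*} {n : ℕ}

theorem tail_snoc (g : Fin (n + 1) → α) (x : α) :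
    tail (snoc g x : Fin (n + 2) → α) = snoc (tail g) x := by
  funext k
  refine lastCases ?_ (fun k => ?_) k
  · rw [tail, succ_last, snoc_last, snoc_last]
  · rw [tail, succ_castSucc, snoc_castSucc, snoc_castSucc, tail]

theorem contractNth_last_snoc (op : α → α → α) (g : Fin (n + 1) → α) (x : α) :
    contractNth (last (n + 1)) op (snoc g x) = g := by
  funext k
  rw [contractNth_apply_of_lt _ _ _ _ (by simp [k.is_lt]), snoc_castSucc]

theorem contractNth_castSucc_last_snoc (op : α → α → α) (g : Fin (n + 1) → α) (x : α) :
    contractNth (castSucc (last n)) op (snoc g x) =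
      snoc (contractNth (last n) op g) (op (g (last n)) x) := by
  funext k
  refine lastCases ?_ (fun k => ?_) k
  · rw [contractNth_apply_of_eq _ _ _ _ (by simp), snoc_last, snoc_castSucc, succ_last, snoc_last]
  · rw [contractNth_apply_of_lt _ _ _ _ (by simp), snoc_castSucc, snoc_castSucc,
      contractNth_apply_of_lt _ _ _ _ (by simp)]

theorem contractNth_castSucc_castSucc_snoc (op : α → α → α) (g : Fin (n + 1) → α) (x : α)
    (i : Fin n) :
    contractNth (castSucc (castSucc i)) op (snoc g x) = snoc (contractNth (castSucc i) op g) x := by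
  funext k
  refine lastCases ?_ (fun k => ?_) k
  · rw [contractNth_apply_of_gt _ _ _ _ (by simp), snoc_last, succ_last, snoc_last]
  · rcases lt_trichotomy (k : ℕ) i with h | h | h
    · rw [contractNth_apply_of_lt _ _ _ _ (by simpa using h), snoc_castSucc, snoc_castSucc,
        contractNth_apply_of_lt _ _ _ _ (by simpa using h)]
    · rw [contractNth_apply_of_eq _ _ _ _ (by simpa using h), snoc_castSucc, succ_castSucc,
        snoc_castSucc, snoc_castSucc, contractNth_apply_of_eq _ _ _ _ (by simpa using h)]
    · rw [contractNth_apply_of_gt _ _ _ _ (by simpa using h), succ_castSucc, snoc_castSucc,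
        snoc_castSucc, contractNth_apply_of_gt _ _ _ _ (by simpa using h)]

end Fin

variable {G V : Type} [Group G] [AddCommGroup V] [Module ℚ V]

/-- The differential of `inhomogeneousCochains (Rep.trivial ℚ G V)` as a plain function, which
`simp` can unfold (see `inhomogeneousCochains_d_trivial`). -/
def dTrivial (n : ℕ) (f : (Fin n → G) → V) : (Fin (n + 1) → G) → V :=
  fun g => f (Fin.tail g) +
    ∑ j : Fin (n + 1), (-1 : ℚ) ^ ((j : ℕ) + 1) • f (Fin.contractNth j (· * ·) g)

theorem inhomogeneousCochains_d_trivial {n : ℕ} (f : (Fin n → G) → V) :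
    inhomogeneousCochains.d (Rep.trivial ℚ G V) n f = dTrivial n f := by
  funext g
  simp [inhomogeneousCochains.d_hom_apply, dTrivial]
  rfl

theorem dTrivial_sub {n : ℕ} (f f' : (Fin n → G) → V) :
    dTrivial n (f - f') = dTrivial n f - dTrivial n f' := by
  simp only [← inhomogeneousCochains_d_trivial, map_sub]

theorem dTrivial_smul {n : ℕ} (c : ℚ) (f : (Fin n → G) → V) :
    dTrivial n (c • f) = c • dTrivial n f := by
  simp only [← inhomogeneousCochains_d_trivial, map_smul]

theorem dTrivial_dTrivial {n : ℕ} (f : (Fin n → G) → V) :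
    dTrivial (n + 1) (dTrivial n f) = 0 := by
  simp only [← inhomogeneousCochains_d_trivial]
  exact congr($(groupCohomology.inhomogeneousCochains.d_comp_d (n := n) (Rep.trivial ℚ G V)) f)

noncomputable def sumSnoc (H : Subgroup G) [Fintype H] {n : ℕ} (f : (Fin (n + 1) → G) → V) :
    (Fin n → G) → V :=
  fun t => ∑ h : H, f (Fin.snoc t h)

theorem sum_dTrivial_snoc (H : Subgroup G) [Fintype H] {n : ℕ} (f : (Fin (n + 1) → G) → V)
    {g : Fin (n + 1) → G} (hg : g (Fin.last n) ∈ H) :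
    ∑ h : H, dTrivial (n + 1) f (Fin.snoc g h) =
      dTrivial n (sumSnoc H f) g + (-1 : ℚ) ^ n • Fintype.card H • f g := by
  have reindex :
      ∑ h : H, f (Fin.snoc (Fin.contractNth (Fin.last n) (· * ·) g) (g (Fin.last n) * h)) =
        ∑ h : H, f (Fin.snoc (Fin.contractNth (Fin.last n) (· * ·) g) h) :=
    Fintype.sum_equiv (Equiv.mulLeft ⟨_, hg⟩) _ _ fun _ => rfl
  simp only [dTrivial, sumSnoc, Finset.sum_add_distrib, Fin.sum_univ_castSucc (n := n + 1),
    Fin.sum_univ_castSucc (n := n), Fin.tail_snoc, Fin.contractNth_castSucc_castSucc_snoc,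
    Fin.contractNth_castSucc_last_snoc, Fin.contractNth_last_snoc, ← Finset.smul_sum, reindex]
  rw [Finset.sum_comm]
  have hsign : (-1 : ℚ) ^ (n + 1 + 1) = (-1) ^ n := by ring
  simp only [Finset.sum_const, Finset.card_univ, Finset.smul_sum, Fin.val_castSucc, Fin.val_last,
    hsign]
  abel

namespace Subgroup

/-- Agreement of cochains of `G` on `H.tuples` stands in for agreement of their restrictions to
cochains of `H`. -/
abbrev tuples {n : ℕ} (H : Subgroup G) : Set (Fin n → G) := univ.pi fun _ => (H : Set G)

theorem snoc_mem_tuples {H : Subgroup G} {n : ℕ} {g : Fin n → G} (hg : g ∈ H.tuples) {x : G}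
    (hx : x ∈ H) : (Fin.snoc g x : Fin (n + 1) → G) ∈ H.tuples := by
  simp only [mem_univ_pi, Fin.forall_fin_succ', Fin.snoc_castSucc, Fin.snoc_last] at hg ⊢
  exact ⟨hg, hx⟩

theorem tail_mem_tuples {H : Subgroup G} {n : ℕ} {g : Fin (n + 1) → G} (hg : g ∈ H.tuples) :
    Fin.tail g ∈ H.tuples :=
  mem_univ_pi.2 fun i => hg i.succ (mem_univ _)

theorem contractNth_mem_tuples {H : Subgroup G} {n : ℕ} {g : Fin (n + 1) → G}
    (hg : g ∈ H.tuples) (j : Fin (n + 1)) : Fin.contractNth j (· * ·) g ∈ H.tuples := by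
  rw [mem_univ_pi] at hg ⊢
  intro k
  unfold Fin.contractNth
  split_ifs
  · exact hg _
  · exact mul_mem (hg _) (hg _)
  · exact hg _

theorem tuples_mono {H K : Subgroup G} (hHK : H ≤ K) {n : ℕ} :
    (H.tuples : Set (Fin n → G)) ⊆ K.tuples :=
  pi_mono fun _ _ => hHK

end Subgroup

open Subgroup

theorem eqOn_dTrivial_of_eqOn {H : Subgroup G} {n : ℕ} {φ φ' : (Fin n → G) → V}
    (h : EqOn φ φ' H.tuples) : EqOn (dTrivial n φ) (dTrivial n φ') H.tuples := by
  intro g hg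
  simp only [dTrivial, h (tail_mem_tuples hg), h (contractNth_mem_tuples hg _)]

theorem dTrivial_zero (φ : (Fin 0 → G) → V) : dTrivial 0 φ = 0 := by
  funext g
  simp [dTrivial, Subsingleton.elim (Fin.tail g) (Fin.contractNth 0 (· * ·) g)]

theorem exists_dTrivial_eqOn_of_finite (H : Subgroup G) [Finite H] {n : ℕ}
    {f : (Fin (n + 1) → G) → V} (hf : EqOn (dTrivial (n + 1) f) 0 H.tuples) :
    ∃ φ, EqOn (dTrivial n φ) f H.tuples := by
  have := Fintype.ofFinite H
  have hcard : (Fintype.card H : ℚ) ≠ 0 := by exact_mod_cast Fintype.card_ne_zero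
  refine ⟨((-1 : ℚ) ^ (n + 1) * (Fintype.card H : ℚ)⁻¹) • sumSnoc H f, fun g hg => ?_⟩
  have hsum := sum_dTrivial_snoc H f (g := g) (hg _ (mem_univ _))
  rw [Finset.sum_eq_zero fun h _ => hf (snoc_mem_tuples hg h.2)] at hsum
  rw [dTrivial_smul, Pi.smul_apply, eq_neg_of_add_eq_zero_left hsum.symm,
    ← Nat.cast_smul_eq_nsmul ℚ]
  match_scalars
  field_simp
  rw [pow_succ, mul_right_comm, ← mul_pow]
  norm_num

theorem exists_dTrivial_eqOn_extend {H K : Subgroup G} [Finite H] [Finite K] (hHK : H ≤ K) {n : ℕ}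
    {f : (Fin (n + 1) → G) → V} (hf : EqOn (dTrivial (n + 1) f) 0 K.tuples)
    {φ : (Fin n → G) → V} (hφ : EqOn (dTrivial n φ) f H.tuples) :
    ∃ φ', EqOn (dTrivial n φ') f K.tuples ∧ EqOn φ' φ H.tuples := by
  obtain ⟨ψ, hψ⟩ := exists_dTrivial_eqOn_of_finite K hf
  cases n with
  | zero => exact ⟨φ, fun g hg => by rw [← hψ hg, dTrivial_zero, dTrivial_zero], eqOn_refl _ _⟩
  | succ n =>
    obtain ⟨θ, hθ⟩ := exists_dTrivial_eqOn_of_finite H (f := ψ - φ) fun g hg => by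
      rw [dTrivial_sub, Pi.sub_apply, hψ (fun i _ => hHK (hg i (mem_univ _))), hφ hg, sub_self]
      rfl
    classical
    refine ⟨ψ - dTrivial n (H.tuples.indicator θ), fun g hg => ?_, fun t ht => ?_⟩
    · rw [dTrivial_sub, dTrivial_dTrivial, sub_zero, hψ hg]
    · rw [Pi.sub_apply, eqOn_dTrivial_of_eqOn Set.eqOn_indicator ht, hθ ht, Pi.sub_apply]
      abel

section DirectedUnion

variable {U : ℕ → Subgroup G} (hmono : Monotone U)
include hmono

theorem exists_mem_tuples (hunion : ∀ g, ∃ k, g ∈ U k) {n : ℕ} (t : Fin n → G) :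
    ∃ k, t ∈ (U k).tuples := by
  choose k hk using fun i => hunion (t i)
  exact ⟨Finset.univ.sup k, fun i _ => hmono (Finset.le_sup (Finset.mem_univ i)) (hk i)⟩

theorem exists_compatible_dTrivial_eqOn [∀ k, Finite (U k)] {n : ℕ}
    {f : (Fin (n + 1) → G) → V} (hf : dTrivial (n + 1) f = 0) :
    ∃ φ : ℕ → (Fin n → G) → V, (∀ k, EqOn (dTrivial n (φ k)) f (U k).tuples) ∧
      ∀ k l, k ≤ l → EqOn (φ l) (φ k) (U k).tuples := by
  have hcocycle : ∀ k, EqOn (dTrivial (n + 1) f) 0 (U k).tuples := fun k => by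
    rw [hf]; exact eqOn_refl _ _
  obtain ⟨φ₀, hφ₀⟩ := exists_dTrivial_eqOn_of_finite (U 0) (hcocycle 0)
  choose! next hnext hnext_eq using fun k (φ : (Fin n → G) → V)
    (hφ : EqOn (dTrivial n φ) f (U k).tuples) =>
      exists_dTrivial_eqOn_extend (hmono k.le_succ) (hcocycle (k + 1)) hφ
  let φ : ℕ → (Fin n → G) → V := fun k => Nat.rec φ₀ next k
  have hφ : ∀ k, EqOn (dTrivial n (φ k)) f (U k).tuples := fun k =>
    Nat.rec hφ₀ (fun k ih => hnext k _ ih) k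
  refine ⟨φ, hφ, fun k l hkl => ?_⟩
  induction l, hkl using Nat.le_induction with
  | base => exact eqOn_refl _ _
  | succ l hkl ih =>
    exact (hnext_eq l _ (hφ l)).mono (tuples_mono (hmono hkl)) |>.trans ih

theorem exists_dTrivial_eq_of_iUnion [∀ k, Finite (U k)] (hunion : ∀ g, ∃ k, g ∈ U k)
    {n : ℕ} {f : (Fin (n + 1) → G) → V} (hf : dTrivial (n + 1) f = 0) :
    ∃ φ, dTrivial n φ = f := by
  obtain ⟨φ, hφ, hcompat⟩ := exists_compatible_dTrivial_eqOn hmono hf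
  choose K hK using exists_mem_tuples hmono hunion (n := n)
  have hglue : ∀ k, EqOn (fun t => φ (K t) t) (φ k) (U k).tuples := fun k t ht =>
    (hcompat (K t) _ (le_max_left _ k) (hK t)).symm.trans (hcompat k _ (le_max_right _ _) ht)
  refine ⟨fun t => φ (K t) t, funext fun g => ?_⟩
  obtain ⟨k, hk⟩ := exists_mem_tuples hmono hunion g
  exact (eqOn_dTrivial_of_eqOn (hglue k) hk).trans (hφ k hk)

end DirectedUnion

theorem subsingleton_groupCohomology_succ_of_forall_exists {k G : Type u} [CommRing k] [Group G]
    {A : Rep k G} {n : ℕ}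
    (h : ∀ f, inhomogeneousCochains.d A (n + 1) f = 0 → ∃ φ, inhomogeneousCochains.d A n φ = f) :
    Subsingleton (groupCohomology A (n + 1)) := by
  rw [← ModuleCat.isZero_iff_subsingleton, groupCohomology,
    ← HomologicalComplex.exactAt_iff_isZero_homology,
    HomologicalComplex.exactAt_iff' _ n (n + 1) (n + 1 + 1) (by simp) (by simp),
    ShortComplex.moduleCat_exact_iff]
  intro f hf
  simp only [HomologicalComplex.shortComplexFunctor'_obj_g,
    HomologicalComplex.shortComplexFunctor'_obj_f, CochainComplex.of_d] at hf ⊢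
  exact h f hf

/-- The key claim in the proof of the lemma inside Proposition `7_prop3`: a group that is
the union of an increasing sequence of finite subgroups has vanishing rational group
cohomology in all positive degrees. -/
theorem stmt_14 (G : Type) [Group G] (U : ℕ → Subgroup G)
    (hmono : ∀ n : ℕ, U n ≤ U (n + 1))
    (hfin : ∀ n : ℕ, Finite (U n))
    (hunion : ∀ g : G, ∃ n : ℕ, g ∈ U n)
    (j : ℕ) (hj : 1 ≤ j) :
    Subsingleton (groupCohomology (Rep.trivial ℚ G ℚ) j) := by
  obtain ⟨m, rfl⟩ := Nat.exists_eq_add_of_le' hj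
  refine subsingleton_groupCohomology_succ_of_forall_exists fun f hf => ?_
  rw [inhomogeneousCochains_d_trivial] at hf
  obtain ⟨φ, hφ⟩ := exists_dTrivial_eq_of_iUnion (monotone_nat_of_le_succ hmono) hunion hf
  exact ⟨φ, (inhomogeneousCochains_d_trivial φ).trans hφ⟩
end
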